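/- Optimality (KKT) conditions for the dual problem: Assume the multigraph Φ(H) of H is connected. Fix pairs of distinct vertices (u_1,v_1),…,(u_t,v_t), each pair contained in some hyperedge of H, and β ∈ ℝ^t with β_i ≥ 0 and Σ_i β_i = 1. Let W* ∈ 𝒲, with weight function w*, maximize W ↦ Σ_{i=1}^t β_i · 𝓔^W_{u_i,v_i} over 𝒲, and for each i let x_i* : V → ℝ with x_i* u_i = 1, x_i* v_i = 0 attain 𝓔^{W*}_{u_i,v_i}. Then for every hyperedge f of H and all unordered pairs {a,b}, {c,d} ⊆ f: (1) if w*_f(a,b) > 1/(8r²) and w*_f(c,d) > 1/(8r²), then Σ_{i=1}^t β_i (x_i* a − x_i* b)² = Σ_{i=1}^t β_i (x_i* c − x_i* d)²; (2) if w*_f(a,b) > 1/(8r²) and w*_f(c,d) = 1/(8r²), then Σ_{i=1}^t β_i (x_i* a − x_i* b)² ≥ Σ_{i=1}^t β_i (x_i* c − x_i* d)². -/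

import Mathlib

open Finset

/-- The function on unordered pairs sending `{a,b}` to `(x a - x b)^2`. -/
noncomputable def sqd {V : Type*} (x : V → ℝ) : Sym2 V → ℝ :=
  Sym2.lift ⟨fun a b => (x a - x b) ^ 2, fun a b => by ring⟩

/-- The unordered pairs of distinct vertices inside a hyperedge `e`. -/
def pairs {V : Type*} [DecidableEq V] (e : Finset V) : Finset (Sym2 V) :=
  e.sym2.filter fun p => ¬ p.IsDiag

/-- The energy `E^W(x)` of a potential vector `x` under weight assignment `w`. -/
noncomputable def energy {V : Type*} [DecidableEq V] (H : Finset (Finset V))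
    (w : Finset V → Sym2 V → ℝ) (x : V → ℝ) : ℝ :=
  ∑ e ∈ H, ∑ p ∈ pairs e, w e p * sqd x p

/-- Validity of a weight assignment. -/
def ValidWeight {V : Type*} [DecidableEq V] (H : Finset (Finset V)) (r : ℕ)
    (w : Finset V → Sym2 V → ℝ) : Prop :=
  (∀ e ∈ H, ∀ p ∈ pairs e, 1 / (8 * (r : ℝ) ^ 2) ≤ w e p) ∧
  (∀ e ∈ H, ∑ p ∈ pairs e, w e p = 1)

/-- The minimum energy `𝓔^W_{u,v}` between `u` and `v` under `w`. -/
noncomputable def minEnergy {V : Type*} [DecidableEq V] (H : Finset (Finset V))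
    (w : Finset V → Sym2 V → ℝ) (u v : V) : ℝ :=
  ⨅ x : {x : V → ℝ // x u = 1 ∧ x v = 0}, energy H w x.1

/-- The (simple graph underlying the) multigraph `Φ(H)` of a hypergraph `H`. -/
def multiGraph {V : Type*} (H : Finset (Finset V)) : SimpleGraph V where
  Adj a b := a ≠ b ∧ ∃ e ∈ H, a ∈ e ∧ b ∈ e
  symm := by
    constructor
    rintro a b ⟨hab, e, he, ha, hb⟩
    exact ⟨Ne.symm hab, e, he, hb, ha⟩
  loopless := ⟨fun a h => h.1 rfl⟩

-- auxiliary
noncomputable def cross {V : Type*} (x h : V → ℝ) : Sym2 V → ℝ :=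
  Sym2.lift ⟨fun a b => (x a - x b) * (h a - h b), fun a b => by ring⟩

lemma sqd_nonneg {V : Type*} (x : V → ℝ) (p : Sym2 V) : 0 ≤ sqd x p := by
  induction p using Sym2.ind with
  | _ a b => simp only [sqd, Sym2.lift_mk]; positivity

lemma cross_sq {V : Type*} (x h : V → ℝ) (p : Sym2 V) :
    cross x h p ^ 2 = sqd x p * sqd h p := by
  induction p using Sym2.ind with
  | _ a b => simp only [sqd, cross, Sym2.lift_mk]; ring

lemma sqd_expand {V : Type*} (x h : V → ℝ) (c : ℝ) (p : Sym2 V) :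
    sqd (fun z => x z + c * h z) p = sqd x p + 2 * c * cross x h p + c ^ 2 * sqd h p := by
  induction p using Sym2.ind with
  | _ a b => simp only [sqd, cross, Sym2.lift_mk]; ring

lemma energy_expand {V : Type*} [DecidableEq V] (H : Finset (Finset V))
    (w : Finset V → Sym2 V → ℝ) (x h : V → ℝ) (c : ℝ) :
    energy H w (fun z => x z + c * h z)
      = energy H w x + 2 * c * (∑ e ∈ H, ∑ p ∈ pairs e, w e p * cross x h p)
        + c ^ 2 * energy H w h := by
  unfold energy
  rw [Finset.mul_sum, Finset.mul_sum, ← Finset.sum_add_distrib, ← Finset.sum_add_distrib]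
  refine Finset.sum_congr rfl fun e _ => ?_
  rw [Finset.mul_sum, Finset.mul_sum, ← Finset.sum_add_distrib, ← Finset.sum_add_distrib]
  refine Finset.sum_congr rfl fun p _ => ?_
  rw [sqd_expand]; ring

lemma energy_nonneg {V : Type*} [DecidableEq V] {H : Finset (Finset V)} {r : ℕ}
    {w : Finset V → Sym2 V → ℝ} (hw : ValidWeight H r w) (x : V → ℝ) :
    0 ≤ energy H w x := by
  refine Finset.sum_nonneg fun e he => Finset.sum_nonneg fun p hp => ?_
  have h1 := hw.1 e he p hp
  have h2 : (0:ℝ) ≤ 1 / (8 * (r : ℝ) ^ 2) := by positivity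
  exact mul_nonneg (le_trans h2 h1) (sqd_nonneg x p)

lemma term_le_energy {V : Type*} [DecidableEq V] {H : Finset (Finset V)} {r : ℕ}
    {w : Finset V → Sym2 V → ℝ} (hw : ValidWeight H r w) {e : Finset V} (he : e ∈ H)
    {p : Sym2 V} (hp : p ∈ pairs e) (x : V → ℝ) :
    w e p * sqd x p ≤ energy H w x := by
  have inner : w e p * sqd x p ≤ ∑ p' ∈ pairs e, w e p' * sqd x p' := by
    refine Finset.single_le_sum (f := fun p' => w e p' * sqd x p') (fun p' hp' => ?_) hp
    have h1 := hw.1 e he p' hp'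
    have h2 : (0:ℝ) ≤ 1 / (8 * (r : ℝ) ^ 2) := by positivity
    exact mul_nonneg (le_trans h2 h1) (sqd_nonneg x p')
  refine le_trans inner (Finset.single_le_sum
    (f := fun e' => ∑ p' ∈ pairs e', w e' p' * sqd x p') (fun e' he' => ?_) he)
  refine Finset.sum_nonneg fun p' hp' => ?_
  have h1 := hw.1 e' he' p' hp'
  have h2 : (0:ℝ) ≤ 1 / (8 * (r : ℝ) ^ 2) := by positivity
  exact mul_nonneg (le_trans h2 h1) (sqd_nonneg x p')

lemma minEnergy_le {V : Type*} [DecidableEq V] {H : Finset (Finset V)} {r : ℕ}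
    {w : Finset V → Sym2 V → ℝ} (hw : ValidWeight H r w) {u v : V} {y : V → ℝ}
    (hy1 : y u = 1) (hy0 : y v = 0) : minEnergy H w u v ≤ energy H w y := by
  exact ciInf_le ⟨0, by rintro z ⟨x, rfl⟩; exact energy_nonneg hw x.1⟩
    (⟨y, hy1, hy0⟩ : {x : V → ℝ // x u = 1 ∧ x v = 0})

lemma le_minEnergy {V : Type*} [DecidableEq V] {H : Finset (Finset V)}
    {w : Finset V → Sym2 V → ℝ} {u v : V} (huv : u ≠ v) {c : ℝ}
    (h : ∀ y : V → ℝ, y u = 1 → y v = 0 → c ≤ energy H w y) :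
    c ≤ minEnergy H w u v := by
  have : Nonempty {x : V → ℝ // x u = 1 ∧ x v = 0} :=
    ⟨⟨fun z => if z = u then 1 else 0, by simp, by simp [huv.symm]⟩⟩
  exact le_ciInf fun y => h y.1 y.2.1 y.2.2

lemma amgm' (X Y z : ℝ) (hX : 0 ≤ X) (hY : 0 ≤ Y) (hz : z ^ 2 = 4 * X * Y) :
    0 ≤ X + Y + z := by
  nlinarith [sq_nonneg (X - Y), sq_nonneg (X + Y + z)]

lemma amgm (a b c s μ : ℝ) (ha : 0 ≤ a) (hb : 0 ≤ b) (hs : 0 ≤ s) (hμ : 0 ≤ μ)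
    (hc : c ^ 2 = a * b) : 0 ≤ μ ^ 2 * b / 4 + 4 * s ^ 2 * a + 2 * s * μ * c := by
  have := amgm' (μ ^ 2 * b / 4) (4 * s ^ 2 * a) (2 * s * μ * c) (by positivity) (by positivity)
    (by have h4 : (2 * s * μ * c) ^ 2 = 4 * s ^ 2 * μ ^ 2 * c ^ 2 := by ring
        rw [h4, hc]; ring)
  linarith

lemma sum_delta {V : Type*} [DecidableEq V] (H : Finset (Finset V)) {f : Finset V}
    (hf : f ∈ H) {p : Sym2 V} (hp : p ∈ pairs f) (c : ℝ) (g : Sym2 V → ℝ) :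
    ∑ e ∈ H, ∑ p' ∈ pairs e, (if e = f ∧ p' = p then c else 0) * g p' = c * g p := by
  rw [Finset.sum_eq_single_of_mem f hf]
  · rw [Finset.sum_eq_single_of_mem p hp]
    · simp
    · intro p' _ hne; simp [hne]
  · intro e _ hne; exact Finset.sum_eq_zero fun p' _ => by simp [hne]

lemma quad_zero (B Q : ℝ) (hQ : 0 ≤ Q) (h : ∀ τ : ℝ, 0 ≤ 2 * τ * B + τ ^ 2 * Q) :
    B = 0 := by
  have hQ1 : (0:ℝ) < Q + 1 := by linarith
  have h1 := h (-B / (Q + 1))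
  have h3 : 2 * (-B / (Q + 1)) * B + (-B / (Q + 1)) ^ 2 * Q
      = -(B ^ 2 * (Q + 2)) / (Q + 1) ^ 2 := by field_simp; ring
  rw [h3] at h1
  have h4 : B ^ 2 * (Q + 2) ≤ 0 := by
    by_contra hcon
    push_neg at hcon
    have : -(B ^ 2 * (Q + 2)) / (Q + 1) ^ 2 < 0 := by
      apply div_neg_of_neg_of_pos (by linarith) (by positivity)
    linarith
  have h5 : B ^ 2 = 0 := le_antisymm (by nlinarith) (sq_nonneg B)
  exact pow_eq_zero_iff two_ne_zero |>.mp h5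

def perturb {V : Type*} [DecidableEq V] (w : Finset V → Sym2 V → ℝ) (f : Finset V)
    (p q : Sym2 V) (s : ℝ) : Finset V → Sym2 V → ℝ :=
  fun e p' => w e p' +
    ((if e = f ∧ p' = p then -s else 0) + (if e = f ∧ p' = q then s else 0))

lemma energy_perturb {V : Type*} [DecidableEq V] (H : Finset (Finset V))
    (w : Finset V → Sym2 V → ℝ) {f : Finset V} (hf : f ∈ H) {p q : Sym2 V}
    (hp : p ∈ pairs f) (hq : q ∈ pairs f) (s : ℝ) (y : V → ℝ) :
    energy H (perturb w f p q s) y = energy H w y + s * (sqd y q - sqd y p) := by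
  unfold energy perturb
  have h1 : ∀ e, ∀ p' : Sym2 V,
      (w e p' + ((if e = f ∧ p' = p then -s else 0) + (if e = f ∧ p' = q then s else 0))) * sqd y p'
      = w e p' * sqd y p' + ((if e = f ∧ p' = p then (-s) else 0) * sqd y p'
        + (if e = f ∧ p' = q then s else 0) * sqd y p') := fun e p' => by ring
  simp only [h1, Finset.sum_add_distrib]
  rw [sum_delta H hf hp (-s) (sqd y), sum_delta H hf hq s (sqd y)]
  ring

lemma valid_perturb {V : Type*} [DecidableEq V] {H : Finset (Finset V)} {r : ℕ}
    {w : Finset V → Sym2 V → ℝ} (hw : ValidWeight H r w) {f : Finset V} (hf : f ∈ H)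
    {p q : Sym2 V} (hp : p ∈ pairs f) (hq : q ∈ pairs f) (hpq : p ≠ q) {s : ℝ}
    (hs0 : 0 ≤ s) (hsp : s ≤ w f p - 1 / (8 * (r : ℝ) ^ 2)) :
    ValidWeight H r (perturb w f p q s) := by
  constructor
  · intro e he p' hp'
    unfold perturb
    by_cases hef : e = f
    · subst hef
      by_cases h1 : p' = p
      · subst h1
        have : ¬ (p' = q) := hpq
        simp only [this, and_false, if_false, and_true, if_true, add_zero]
        linarith
      · by_cases h2 : p' = q
        · subst h2
          simp only [h1, and_false, if_false, and_true, if_true, zero_add]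
          have := hw.1 e he p' hp'
          linarith
        · simp only [h1, h2, and_false, if_false, add_zero]
          exact hw.1 e he p' hp'
    · simp only [hef, false_and, if_false, add_zero]
      exact hw.1 e he p' hp'
  · intro e he
    unfold perturb
    rw [Finset.sum_add_distrib, Finset.sum_add_distrib, hw.2 e he]
    by_cases hef : e = f
    · subst hef
      have e1 : (∑ p' ∈ pairs e, if e = e ∧ p' = p then -s else 0) = -s := by
        simp only [true_and]
        rw [Finset.sum_ite_eq' (pairs e) p (fun _ => -s)]
        simp [hp]
      have e2 : (∑ p' ∈ pairs e, if e = e ∧ p' = q then s else 0) = s := by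
        simp only [true_and]
        rw [Finset.sum_ite_eq' (pairs e) q (fun _ => s)]
        simp [hq]
      rw [e1, e2]; ring
    · simp [hef]

lemma per_y {V : Type*} [DecidableEq V] {H : Finset (Finset V)} {r : ℕ}
    {wstar : Finset V → Sym2 V → ℝ} (hwstar : ValidWeight H r wstar)
    {u v : V} {x : V → ℝ} (hx1 : x u = 1) (hx0 : x v = 0)
    (hxopt : energy H wstar x = minEnergy H wstar u v)
    {f : Finset V} (hf : f ∈ H) {p q : Sym2 V} (hp : p ∈ pairs f) (hq : q ∈ pairs f)
    {s μ : ℝ} (hμdef : μ = 1 / (8 * (r : ℝ) ^ 2)) (hμ : 0 < μ)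
    (hs0 : 0 < s) (hs2 : s ≤ μ / 2)
    {y : V → ℝ} (hy1 : y u = 1) (hy0 : y v = 0) :
    μ * (energy H wstar x + s * (sqd x q - sqd x p)) - 4 * s ^ 2 * (sqd x p + sqd x q)
      ≤ μ * (energy H wstar y + s * (sqd y q - sqd y p)) := by
  set h : V → ℝ := fun z => y z - x z with hhdef
  have hyx : y = fun z => x z + 1 * h z := by
    funext z; simp [hhdef]
  have hfeas : ∀ τ : ℝ, energy H wstar x ≤ energy H wstar (fun z => x z + τ * h z) := by
    intro τ
    rw [hxopt]
    refine minEnergy_le hwstar ?_ ?_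
    · show x u + τ * h u = 1
      simp [hhdef, hx1, hy1]
    · show x v + τ * h v = 0
      simp [hhdef, hx0, hy0]
  have hQ0 : 0 ≤ energy H wstar h := energy_nonneg hwstar h
  have hquad : ∀ τ : ℝ, 0 ≤ 2 * τ * (∑ e ∈ H, ∑ p' ∈ pairs e, wstar e p' * cross x h p')
      + τ ^ 2 * energy H wstar h := by
    intro τ
    have h1 := hfeas τ
    rw [energy_expand] at h1
    linarith
  have hB : (∑ e ∈ H, ∑ p' ∈ pairs e, wstar e p' * cross x h p') = 0 :=
    quad_zero _ _ hQ0 hquad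
  have hEy : energy H wstar y = energy H wstar x + energy H wstar h := by
    rw [hyx, energy_expand, hB]; ring
  have hdp : μ * sqd h p ≤ energy H wstar h := by
    have h1 := term_le_energy hwstar hf hp h
    have h2 : μ ≤ wstar f p := hμdef ▸ hwstar.1 f hf p hp
    nlinarith [sqd_nonneg h p]
  have hdq : μ * sqd h q ≤ energy H wstar h := by
    have h1 := term_le_energy hwstar hf hq h
    have h2 : μ ≤ wstar f q := hμdef ▸ hwstar.1 f hf q hq
    nlinarith [sqd_nonneg h q]
  have hamq := amgm (sqd x q) (sqd h q) (cross x h q) s μ (sqd_nonneg x q) (sqd_nonneg h q)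
    hs0.le hμ.le (cross_sq x h q)
  have hamp := amgm (sqd x p) (sqd h p) (-(cross x h p)) s μ (sqd_nonneg x p) (sqd_nonneg h p)
    hs0.le hμ.le
    (by rw [show (-(cross x h p)) ^ 2 = (cross x h p) ^ 2 from by ring]; exact cross_sq x h p)
  have hyq : sqd y q = sqd x q + 2 * cross x h q + sqd h q := by
    rw [hyx, sqd_expand]; ring
  have hyp' : sqd y p = sqd x p + 2 * cross x h p + sqd h p := by
    rw [hyx, sqd_expand]; ring
  rw [hEy, hyq, hyp']
  nlinarith [hamq, hamp, mul_le_mul_of_nonneg_left hdp hμ.le,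
    mul_le_mul_of_nonneg_left hdq hμ.le,
    mul_nonneg (mul_nonneg (by linarith : (0:ℝ) ≤ μ / 2 - s) hμ.le) (sqd_nonneg h p),
    mul_nonneg (mul_nonneg hs0.le hμ.le) (sqd_nonneg h q)]

lemma key_ineq {V : Type*} [Fintype V] [DecidableEq V]
    (H : Finset (Finset V)) (r : ℕ) (hr : 2 ≤ r)
    (t : ℕ) (u v : Fin t → V) (huv : ∀ i, u i ≠ v i)
    (β : Fin t → ℝ) (hβ0 : ∀ i, 0 ≤ β i)
    (wstar : Finset V → Sym2 V → ℝ) (hwstar : ValidWeight H r wstar)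
    (hmax : ∀ w : Finset V → Sym2 V → ℝ, ValidWeight H r w →
      ∑ i, β i * minEnergy H w (u i) (v i) ≤ ∑ i, β i * minEnergy H wstar (u i) (v i))
    (xstar : Fin t → V → ℝ)
    (hx1 : ∀ i, xstar i (u i) = 1) (hx0 : ∀ i, xstar i (v i) = 0)
    (hxopt : ∀ i, energy H wstar (xstar i) = minEnergy H wstar (u i) (v i))
    (f : Finset V) (hf : f ∈ H)
    (p q : Sym2 V) (hp : p ∈ pairs f) (hq : q ∈ pairs f)
    (hwp : 1 / (8 * (r : ℝ) ^ 2) < wstar f p) :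
    ∑ i, β i * sqd (xstar i) q ≤ ∑ i, β i * sqd (xstar i) p := by
  by_cases hpq : p = q
  · subst hpq; exact le_refl _
  have hr2 : (2:ℝ) ≤ (r:ℝ) := by exact_mod_cast hr
  set μ : ℝ := 1 / (8 * (r : ℝ) ^ 2) with hμdef
  have h8 : (0:ℝ) < 8 * (r:ℝ) ^ 2 := by nlinarith
  have hμ : 0 < μ := by rw [hμdef]; exact one_div_pos.mpr h8
  set Dp := ∑ i, β i * sqd (xstar i) p with hDp
  set Dq := ∑ i, β i * sqd (xstar i) q with hDq
  set K := ∑ i, β i * (sqd (xstar i) p + sqd (xstar i) q) with hK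
  have hK0 : 0 ≤ K := by
    rw [hK]
    exact Finset.sum_nonneg fun i _ => mul_nonneg (hβ0 i)
      (add_nonneg (sqd_nonneg _ _) (sqd_nonneg _ _))
  have est : ∀ s : ℝ, 0 < s → s ≤ wstar f p - μ → s ≤ μ / 2 →
      s * (Dq - Dp) ≤ 4 * s ^ 2 / μ * K := by
    intro s hs0 hsp hs2
    have hvalid : ValidWeight H r (perturb wstar f p q s) :=
      valid_perturb hwstar hf hp hq hpq hs0.le (by rw [← hμdef]; exact hsp)
    have per_i : ∀ i, energy H wstar (xstar i) + s * (sqd (xstar i) q - sqd (xstar i) p)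
        - 4 * s ^ 2 * (sqd (xstar i) p + sqd (xstar i) q) / μ
        ≤ minEnergy H (perturb wstar f p q s) (u i) (v i) := by
      intro i
      refine le_minEnergy (huv i) fun y hy1 hy0 => ?_
      rw [energy_perturb H wstar hf hp hq s y]
      have hmain := per_y hwstar (hx1 i) (hx0 i) (hxopt i) hf hp hq hμdef hμ hs0 hs2 hy1 hy0
      have hrw : energy H wstar (xstar i) + s * (sqd (xstar i) q - sqd (xstar i) p)
          - 4 * s ^ 2 * (sqd (xstar i) p + sqd (xstar i) q) / μ
          = (μ * (energy H wstar (xstar i) + s * (sqd (xstar i) q - sqd (xstar i) p))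
             - 4 * s ^ 2 * (sqd (xstar i) p + sqd (xstar i) q)) / μ := by
        field_simp
      rw [hrw, div_le_iff₀ hμ]
      nlinarith [hmain]
    have hsum2 : ∑ i, β i * (energy H wstar (xstar i)
          + s * (sqd (xstar i) q - sqd (xstar i) p)
          - 4 * s ^ 2 * (sqd (xstar i) p + sqd (xstar i) q) / μ)
        ≤ ∑ i, β i * minEnergy H (perturb wstar f p q s) (u i) (v i) :=
      Finset.sum_le_sum fun i _ => mul_le_mul_of_nonneg_left (per_i i) (hβ0 i)
    have hsum1 := hmax (perturb wstar f p q s) hvalid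
    have hsum3 : ∑ i, β i * minEnergy H wstar (u i) (v i)
        = ∑ i, β i * energy H wstar (xstar i) :=
      Finset.sum_congr rfl fun i _ => by rw [hxopt i]
    have hexpand : ∑ i, β i * (energy H wstar (xstar i)
          + s * (sqd (xstar i) q - sqd (xstar i) p)
          - 4 * s ^ 2 * (sqd (xstar i) p + sqd (xstar i) q) / μ)
        = ∑ i, β i * energy H wstar (xstar i) + s * (Dq - Dp) - 4 * s ^ 2 / μ * K := by
      rw [hDp, hDq, hK]
      rw [show (∑ i, β i * (energy H wstar (xstar i)
          + s * (sqd (xstar i) q - sqd (xstar i) p)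
          - 4 * s ^ 2 * (sqd (xstar i) p + sqd (xstar i) q) / μ))
        = ∑ i, (β i * energy H wstar (xstar i) + s * (β i * sqd (xstar i) q)
          - s * (β i * sqd (xstar i) p)
          - 4 * s ^ 2 / μ * (β i * (sqd (xstar i) p + sqd (xstar i) q)))
        from Finset.sum_congr rfl fun i _ => by ring]
      rw [Finset.sum_sub_distrib, Finset.sum_sub_distrib, Finset.sum_add_distrib,
        ← Finset.mul_sum, ← Finset.mul_sum, ← Finset.mul_sum]
      ring
    linarith
  by_contra hcon
  push_neg at hcon
  have hδ : 0 < Dq - Dp := by linarith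
  have hKμ : 0 < 4 * K + 4 * μ := by linarith
  set s := min (wstar f p - μ) (min (μ / 2) ((Dq - Dp) * μ / (4 * K + 4 * μ))) with hsdef
  have hs0 : 0 < s :=
    lt_min (by linarith) (lt_min (by linarith) (div_pos (mul_pos hδ hμ) hKμ))
  have h1 := est s hs0 (min_le_left _ _) (le_trans (min_le_right _ _) (min_le_left _ _))
  have hs3 : s ≤ (Dq - Dp) * μ / (4 * K + 4 * μ) :=
    le_trans (min_le_right _ _) (min_le_right _ _)
  have hs3' : s * (4 * K + 4 * μ) ≤ (Dq - Dp) * μ := by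
    rw [← le_div_iff₀ hKμ]; exact hs3
  have h1' : μ * (s * (Dq - Dp)) ≤ 4 * s ^ 2 * K := by
    have h2 := mul_le_mul_of_nonneg_left h1 hμ.le
    have heq : μ * (4 * s ^ 2 / μ * K) = 4 * s ^ 2 * K := by field_simp
    linarith
  nlinarith [h1', mul_le_mul_of_nonneg_left hs3' hs0.le,
    mul_pos (mul_pos hs0 hs0) hμ]

/-- **Optimality (KKT) conditions for the dual problem.** If `W*` maximizes
`W ↦ Σ_i β_i 𝓔^W_{u_i,v_i}` over `𝒲` and each `x_i*` attains `𝓔^{W*}_{u_i,v_i}`, then within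
any hyperedge `f`: two pairs with weight strictly above `1/(8r²)` have equal values of
`D = Σ_i β_i (x_i* · − x_i* ·)²`, and a pair with weight strictly above `1/(8r²)` has `D`-value
at least that of a pair with weight exactly `1/(8r²)`. -/
theorem kkt_optimality_conditions
    {V : Type*} [Fintype V] [DecidableEq V]
    (H : Finset (Finset V)) (r : ℕ) (hr : 2 ≤ r)
    (harity : ∀ e ∈ H, r ≤ e.card ∧ e.card ≤ 2 * r)
    (hconn : (multiGraph H).Connected)
    (t : ℕ) (u v : Fin t → V)
    (hpair : ∀ i, u i ≠ v i ∧ ∃ e ∈ H, u i ∈ e ∧ v i ∈ e)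
    (β : Fin t → ℝ) (hβ0 : ∀ i, 0 ≤ β i) (hβ1 : ∑ i, β i = 1)
    (wstar : Finset V → Sym2 V → ℝ) (hwstar : ValidWeight H r wstar)
    (hmax : ∀ w : Finset V → Sym2 V → ℝ, ValidWeight H r w →
      ∑ i, β i * minEnergy H w (u i) (v i) ≤ ∑ i, β i * minEnergy H wstar (u i) (v i))
    (xstar : Fin t → V → ℝ)
    (hx1 : ∀ i, xstar i (u i) = 1) (hx0 : ∀ i, xstar i (v i) = 0)
    (hxopt : ∀ i, energy H wstar (xstar i) = minEnergy H wstar (u i) (v i))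
    (f : Finset V) (hf : f ∈ H)
    (p q : Sym2 V) (hp : p ∈ pairs f) (hq : q ∈ pairs f) :
    (1 / (8 * (r : ℝ) ^ 2) < wstar f p → 1 / (8 * (r : ℝ) ^ 2) < wstar f q →
      ∑ i, β i * sqd (xstar i) p = ∑ i, β i * sqd (xstar i) q) ∧
    (1 / (8 * (r : ℝ) ^ 2) < wstar f p → wstar f q = 1 / (8 * (r : ℝ) ^ 2) →
      ∑ i, β i * sqd (xstar i) q ≤ ∑ i, β i * sqd (xstar i) p) := by
  have huv : ∀ i, u i ≠ v i := fun i => (hpair i).1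
  constructor
  · intro h1 h2
    have ha := key_ineq H r hr t u v huv β hβ0 wstar hwstar hmax xstar hx1 hx0 hxopt
      f hf p q hp hq h1
    have hb := key_ineq H r hr t u v huv β hβ0 wstar hwstar hmax xstar hx1 hx0 hxopt
      f hf q p hq hp h2
    exact le_antisymm hb ha
  · intro h1 _
    exact key_ineq H r hr t u v huv β hβ0 wstar hwstar hmax xstar hx1 hx0 hxopt
      f hf p q hp hq h1
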